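/- arXiv:2004.10131 — 4 statements merged into one kernel-verified Lean document; each statement's English description precedes it below -/
import Mathlib

section
/- Let A be an O-algebra and L a subalgebra of A. Let α be an O-algebra automorphism of A and let β : L → A be an O-algebra homomorphism. Then the following are equivalent: (i) there is an O-algebra automorphism α' of A which extends β and such that α and α' have the same image in Out(A); (ii) there is an isomorphism of A-L-bimodules A_β ≅ A_α; (iii) there is an isomorphism of L-A-bimodules _βA ≅ _αA. -/
universe u

/-- Conjugation by a unit as an `O`-algebra automorphism. -/
def conjAlgEquiv (O : Type u) [CommRing O] {A : Type u} [Ring A] [Algebra O A] (u : Aˣ) :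
    A ≃ₐ[O] A where
  toFun a := (u : A) * a * (↑u⁻¹ : A)
  invFun a := (↑u⁻¹ : A) * a * (u : A)
  left_inv a := by
    simp [mul_assoc, ← mul_assoc (↑u⁻¹ : A)]
  right_inv a := by
    simp [mul_assoc, ← mul_assoc (u : A)]
  map_mul' a b := by
    simp only [mul_assoc]
    rw [← mul_assoc (↑u⁻¹ : A) (u : A), Units.inv_mul, one_mul]
  map_add' a b := by simp [mul_add, add_mul]
  commutes' r := by
    simp [Algebra.commutes r, mul_assoc]

/-- Right multiplication by a unit as an additive equivalence. -/
def mulRightAddEquiv {A : Type u} [Ring A] (u : Aˣ) : A ≃+ A where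
  toFun a := a * u
  invFun a := a * (↑u⁻¹ : A)
  left_inv a := by simp [mul_assoc]
  right_inv a := by simp [mul_assoc]
  map_add' a b := add_mul a b u

/-- Left multiplication by a unit as an additive equivalence. -/
def mulLeftAddEquiv {A : Type u} [Ring A] (u : Aˣ) : A ≃+ A where
  toFun a := (u : A) * a
  invFun a := (↑u⁻¹ : A) * a
  left_inv a := by show (↑u⁻¹ : A) * ((u : A) * a) = a; rw [← mul_assoc]; simp
  right_inv a := by show (u : A) * ((↑u⁻¹ : A) * a) = a; rw [← mul_assoc]; simp
  map_add' a b := mul_add (u : A) a b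

/-- Let `A` be an `O`-algebra and `L` a subalgebra of `A`.  Let `α` be an
`O`-algebra automorphism of `A` and `β : L → A` an `O`-algebra homomorphism.  The following
are equivalent:
(i) there is an `O`-algebra automorphism `α'` of `A` extending `β` such that `α` and `α'`
have the same image in `Out(A)`;
(ii) there is an isomorphism of `A`-`L`-bimodules `A_β ≅ A_α`;
(iii) there is an isomorphism of `L`-`A`-bimodules `_βA ≅ _αA`.

Here `A_β` is `A` as a left `A`-module, with right `L`-action `x · y = x * β y`, and `_βA` is
`A` as a right `A`-module, with left `L`-action `y · x = β y * x`; two automorphisms have the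
same image in `Out(A)` if they differ by conjugation with a unit of `A`. -/
theorem autom_extend_tfae
    {O : Type u} [CommRing O] {A : Type u} [Ring A] [Algebra O A]
    (L : Subalgebra O A) (α : A ≃ₐ[O] A) (β : L →ₐ[O] A) :
    ((∃ α' : A ≃ₐ[O] A, (∀ y : L, α' y = β y) ∧
        ∃ u : Aˣ, ∀ a : A, α' a = (u : A) * α a * (↑u⁻¹ : A)) ↔
      (∃ e : A ≃+ A, (∀ a x : A, e (a * x) = a * e x) ∧
        ∀ (x : A) (y : L), e (x * β y) = e x * α (y : A))) ∧
    ((∃ α' : A ≃ₐ[O] A, (∀ y : L, α' y = β y) ∧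
        ∃ u : Aˣ, ∀ a : A, α' a = (u : A) * α a * (↑u⁻¹ : A)) ↔
      (∃ e : A ≃+ A, (∀ x a : A, e (x * a) = e x * a) ∧
        ∀ (y : L) (x : A), e (β y * x) = α (y : A) * e x)) := by
  constructor
  · constructor
    · rintro ⟨α', hext, u, hu⟩
      have key : ∀ y : L, β y * (u : A) = (u : A) * α (y : A) := by
        intro y
        have h := hu y
        rw [hext y] at h
        rw [h, mul_assoc, Units.inv_mul, mul_one]
      refine ⟨mulRightAddEquiv u, fun a x => by show (a * x) * (u : A) = a * (x * (u : A)); rw [mul_assoc], fun x y => ?_⟩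
      show x * β y * (u : A) = x * (u : A) * α (y : A)
      rw [mul_assoc, key y, mul_assoc]
    · rintro ⟨e, hlin, hcomp⟩
      have he : ∀ x : A, e x = x * e 1 := fun x => by
        conv_lhs => rw [← mul_one x, hlin x 1]
      obtain ⟨x, hx⟩ := e.surjective 1
      rw [he x] at hx
      have hvx : e 1 * x = 1 := by
        apply e.injective
        rw [he (e 1 * x), mul_assoc, hx, mul_one]
      set u : Aˣ := ⟨e 1, x, hvx, hx⟩ with hu
      have key : ∀ y : L, β y * (u : A) = (u : A) * α (y : A) := by
        intro y
        have h1 : e ((1 : A) * β y) = e 1 * α (y : A) := hcomp 1 y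
        rw [one_mul, he (β y)] at h1
        exact h1
      refine ⟨α.trans (conjAlgEquiv O u), fun y => ?_, u, fun a => rfl⟩
      show (u : A) * α (y : A) * (↑u⁻¹ : A) = β y
      rw [← key y, mul_assoc, Units.mul_inv, mul_one]
  · constructor
    · rintro ⟨α', hext, u, hu⟩
      have key : ∀ y : L, (↑u⁻¹ : A) * β y = α (y : A) * (↑u⁻¹ : A) := by
        intro y
        have h := hu y
        rw [hext y] at h
        rw [h, ← mul_assoc, ← mul_assoc, Units.inv_mul, one_mul]
      refine ⟨mulLeftAddEquiv u⁻¹, fun x a => by show (↑u⁻¹ : A) * (x * a) = ((↑u⁻¹ : A) * x) * a; rw [mul_assoc], fun y x => ?_⟩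
      show (↑u⁻¹ : A) * (β y * x) = α (y : A) * ((↑u⁻¹ : A) * x)
      rw [← mul_assoc, key y, mul_assoc]
    · rintro ⟨e, hlin, hcomp⟩
      have he : ∀ x : A, e x = e 1 * x := fun x => by
        conv_lhs => rw [← one_mul x, hlin 1 x]
      obtain ⟨x, hx⟩ := e.surjective 1
      rw [he x] at hx
      have hxv : x * e 1 = 1 := by
        apply e.injective
        rw [he (x * e 1), ← mul_assoc, hx, one_mul]
      set w : Aˣ := ⟨e 1, x, hx, hxv⟩ with hw
      -- here w = e 1, and w has inverse x; careful with Units field order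
      have key : ∀ y : L, (w : A) * β y = α (y : A) * (w : A) := by
        intro y
        have h1 : e (β y * (1 : A)) = α (y : A) * e 1 := hcomp y 1
        rw [mul_one, he (β y)] at h1
        exact h1
      refine ⟨α.trans (conjAlgEquiv O w⁻¹), fun y => ?_, w⁻¹, fun a => rfl⟩
      show (↑w⁻¹ : A) * α (y : A) * (↑w⁻¹⁻¹ : A) = β y
      rw [inv_inv]
      calc (↑w⁻¹ : A) * α (y : A) * (w : A)
          = (↑w⁻¹ : A) * (α (y : A) * (w : A)) := by rw [mul_assoc]
        _ = (↑w⁻¹ : A) * ((w : A) * β y) := by rw [← key y]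
        _ = β y := by rw [← mul_assoc, Units.inv_mul, one_mul]
end

section
/- Let G be a finite group and P a subgroup. Let Q be a subgroup of P×P such that the two canonical projections P×P → P both map Q onto P. Then: (i) if (x,y) ∈ G×G satisfies (x,y)Q(x,y)^{-1} ≤ P×P, then (x,y) ∈ N_G(P)×N_G(P); (ii) N_{G×G}(Q) ≤ N_G(P)×N_G(P) = N_{G×G}(P×P). -/
/-! Conjugation commutes with homomorphisms, so projecting `(x, y)Q(x, y)⁻¹ ≤ P × P` to either
factor gives `xPx⁻¹ ≤ P` and `yPy⁻¹ ≤ P`, which forces `x, y ∈ N_G(P)` since `G` is finite.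
The same projection argument sends `N_{G×G}(Q)` into `N_G(P) × N_G(P)`. -/

namespace Subgroup

variable {G N : Type*} [Group G] [Group N]

theorem mem_normalizer_of_map_conj_le [Finite G] {P : Subgroup G} {x : G}
    (h : P.map (MulAut.conj x).toMonoidHom ≤ P) : x ∈ normalizer (P : Set G) :=
  mem_normalizer_fintype fun _ hn => h ⟨_, hn, rfl⟩

theorem map_map_conj (f : G →* N) (H : Subgroup G) (g : G) :
    (H.map (MulAut.conj g).toMonoidHom).map f = (H.map f).map (MulAut.conj (f g)).toMonoidHom := by
  rw [map_map, map_map]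
  congr 1
  ext
  simp

theorem map_mem_normalizer_of_map_map_conj_le [Finite N] {f : G →* N} {H : Subgroup G}
    {P : Subgroup N} (hH : H.map f = P) {g : G} (h : (H.map (MulAut.conj g).toMonoidHom).map f ≤ P) :
    f g ∈ normalizer (P : Set N) :=
  mem_normalizer_of_map_conj_le (by rwa [map_map_conj, hH] at h)

theorem map_mem_normalizer_of_mem_normalizer {f : G →* N} {H : Subgroup G} {P : Subgroup N}
    (hH : H.map f = P) {g : G} (hg : g ∈ normalizer (H : Set G)) :
    f g ∈ normalizer (P : Set N) :=
  hH ▸ le_normalizer_map f ⟨g, hg, rfl⟩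

theorem normalizer_prod (H : Subgroup G) (K : Subgroup N) :
    normalizer ((H.prod K : Subgroup (G × N)) : Set (G × N)) =
      (normalizer (H : Set G)).prod (normalizer (K : Set N)) := by
  ext ⟨x, y⟩
  simp only [mem_prod, mem_normalizer_iff, Prod.forall, Prod.mul_def, Prod.fst_inv, Prod.snd_inv]
  constructor
  · intro h
    exact ⟨fun a => by simpa using h a 1, fun b => by simpa using h 1 b⟩
  · rintro ⟨hx, hy⟩ a b
    rw [hx a, hy b]

end Subgroup

theorem green_correspondence_normaliser_condition_general
    {G : Type*} [Group G] [Finite G] (P : Subgroup G) (Q : Subgroup (G × G))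
    (hfst : Q.map (MonoidHom.fst G G) = P)
    (hsnd : Q.map (MonoidHom.snd G G) = P) :
    (∀ x y : G,
        Subgroup.map (MulAut.conj ((x, y) : G × G)).toMonoidHom Q ≤ P.prod P →
          x ∈ Subgroup.normalizer (P : Set G) ∧ y ∈ Subgroup.normalizer (P : Set G)) ∧
    Subgroup.normalizer (Q : Set (G × G)) ≤
      (Subgroup.normalizer (P : Set G)).prod (Subgroup.normalizer (P : Set G)) ∧
    (Subgroup.normalizer (P : Set G)).prod (Subgroup.normalizer (P : Set G)) =
      Subgroup.normalizer ((P.prod P : Subgroup (G × G)) : Set (G × G)) := by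
  refine ⟨fun x y h => ?_, fun g hg => ?_, (Subgroup.normalizer_prod P P).symm⟩
  · obtain ⟨h₁, h₂⟩ := Subgroup.le_prod_iff.mp h
    exact ⟨Subgroup.map_mem_normalizer_of_map_map_conj_le hfst h₁,
      Subgroup.map_mem_normalizer_of_map_map_conj_le hsnd h₂⟩
  · exact ⟨Subgroup.map_mem_normalizer_of_mem_normalizer hfst hg,
      Subgroup.map_mem_normalizer_of_mem_normalizer hsnd hg⟩

/-- Let `G` be a finite group and `P` a subgroup.  Let `Q` be a subgroup of
`P × P` such that the two canonical projections `P × P → P` both map `Q` onto `P`.  Then: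
(i) if `(x,y) ∈ G × G` satisfies `(x,y)Q(x,y)⁻¹ ≤ P × P`, then
`(x,y) ∈ N_G(P) × N_G(P)`; (ii) `N_{G×G}(Q) ≤ N_G(P) × N_G(P) = N_{G×G}(P × P)`. -/
theorem green_correspondence_normaliser_condition
    {G : Type*} [Group G] [Finite G] (P : Subgroup G) (Q : Subgroup (G × G))
    (hQle : Q ≤ P.prod P)
    (hfst : Q.map (MonoidHom.fst G G) = P)
    (hsnd : Q.map (MonoidHom.snd G G) = P) :
    (∀ x y : G,
        Subgroup.map (MulAut.conj ((x, y) : G × G)).toMonoidHom Q ≤ P.prod P →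
          x ∈ Subgroup.normalizer (P : Set G) ∧ y ∈ Subgroup.normalizer (P : Set G)) ∧
    Subgroup.normalizer (Q : Set (G × G)) ≤
      (Subgroup.normalizer (P : Set G)).prod (Subgroup.normalizer (P : Set G)) ∧
    (Subgroup.normalizer (P : Set G)).prod (Subgroup.normalizer (P : Set G)) =
      Subgroup.normalizer ((P.prod P : Subgroup (G × G)) : Set (G × G)) :=
  green_correspondence_normaliser_condition_general P Q hfst hsnd
end

section
/- Let A = iBi be a source algebra of a block B with defect group P, and let L ≅ O_τ(P⋊E) be the canonically embedded source algebra of the Brauer correspondent (via Puig's embedding L → A), where O is a complete discrete valuation ring with maximal ideal πO. Let γ : L → A be an O-algebra homomorphism such that γ(u) = u for all u ∈ P and such that the induced map k⊗_O L → k⊗_O A is the canonical inclusion. Then there is an element c ∈ 1 + πA^P such that γ(y) = c^{-1}yc for all y ∈ L. -/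
open scoped TensorProduct
noncomputable section

universe u v w

namespace Paper

/-! ## Tensor product over a possibly noncommutative ring -/

section NCT

variable (A : Type u) [Ring A]
variable (M : Type v) [AddCommGroup M] [Module Aᵐᵒᵖ M]
variable (N : Type w) [AddCommGroup N] [Module A N]

/-- The submodule of relations defining the balanced tensor product `M ⊗_A N` of a right
`A`-module `M` and a left `A`-module `N`. -/
def tensorRel : Submodule ℤ (TensorProduct ℤ M N) :=
  Submodule.span ℤ {z | ∃ (a : A) (m : M) (n : N),
    z = (MulOpposite.op a • m) ⊗ₜ[ℤ] n - m ⊗ₜ[ℤ] (a • n)}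

/-- The balanced tensor product `M ⊗_A N` of a right `A`-module and a left `A`-module. -/
def Tensor : Type (max v w) := TensorProduct ℤ M N ⧸ tensorRel A M N

instance : AddCommGroup (Tensor A M N) :=
  inferInstanceAs (AddCommGroup (TensorProduct ℤ M N ⧸ tensorRel A M N))

/-- The quotient map onto the balanced tensor product. -/
def Tensor.q (t : TensorProduct ℤ M N) : Tensor A M N := Submodule.Quotient.mk t

lemma Tensor.q_surjective : Function.Surjective (Tensor.q A M N) :=
  Submodule.Quotient.mk_surjective _

lemma Tensor.q_add (t s : TensorProduct ℤ M N) :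
    Tensor.q A M N (t + s) = Tensor.q A M N t + Tensor.q A M N s := rfl

/-- The canonical map `M → N → M ⊗_A N`. -/
def Tensor.mk (m : M) (n : N) : Tensor A M N :=
  Tensor.q A M N (m ⊗ₜ[ℤ] n)

section Left

variable (B : Type*) [Ring B] [Module B M] [SMulCommClass Aᵐᵒᵖ B M]

/-- Left multiplication by an element of `B` on the balanced tensor product, when `M` is a
`(B,A)`-bimodule. -/
def Tensor.lsmulAux (b : B) : Tensor A M N →ₗ[ℤ] Tensor A M N :=
  Submodule.mapQ _ _ (AddMonoidHom.toIntLinearMap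
      (DistribSMul.toAddMonoidHom (TensorProduct ℤ M N) b)) (by
    rw [tensorRel, Submodule.span_le]
    rintro z ⟨a, m, n, rfl⟩
    simp only [SetLike.mem_coe, Submodule.mem_comap, AddMonoidHom.coe_toIntLinearMap,
      DistribSMul.toAddMonoidHom_apply, smul_sub, TensorProduct.smul_tmul']
    rw [← smul_comm (MulOpposite.op a) b m]
    exact Submodule.subset_span ⟨a, b • m, n, rfl⟩)

instance : SMul B (Tensor A M N) :=
  ⟨fun b x => Tensor.lsmulAux A M N B b x⟩

instance Tensor.instLeftModule : Module B (Tensor A M N) :=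
  Function.Surjective.module B
    { toFun := Submodule.Quotient.mk (p := tensorRel A M N),
      map_zero' := rfl,
      map_add' := fun _ _ => rfl }
    (Submodule.Quotient.mk_surjective _)
    (fun b x => rfl)

end Left


section Right

variable (C : Type*) [Ring C] [Module Cᵐᵒᵖ N] [SMulCommClass A Cᵐᵒᵖ N]

/-- Right multiplication by an element of `Cᵐᵒᵖ` on the balanced tensor product, when `N` is an
`(A,C)`-bimodule. -/
def Tensor.rsmulAux (c : Cᵐᵒᵖ) : Tensor A M N →ₗ[ℤ] Tensor A M N :=
  Submodule.mapQ _ _ (LinearMap.lTensor M (AddMonoidHom.toIntLinearMap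
      (DistribSMul.toAddMonoidHom N c))) (by
    rw [tensorRel, Submodule.span_le]
    rintro z ⟨a, m, n, rfl⟩
    simp only [SetLike.mem_coe, Submodule.mem_comap, map_sub, LinearMap.lTensor_tmul,
      AddMonoidHom.coe_toIntLinearMap, DistribSMul.toAddMonoidHom_apply]
    show LinearMap.lTensor M (AddMonoidHom.toIntLinearMap (DistribSMul.toAddMonoidHom N c))
      ((MulOpposite.op a • m) ⊗ₜ[ℤ] n - m ⊗ₜ[ℤ] (a • n)) ∈ tensorRel A M N
    rw [map_sub, LinearMap.lTensor_tmul, LinearMap.lTensor_tmul]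
    simp only [AddMonoidHom.coe_toIntLinearMap, DistribSMul.toAddMonoidHom_apply]
    rw [← smul_comm a c n]
    exact Submodule.subset_span ⟨a, m, c • n, rfl⟩)

instance : SMul Cᵐᵒᵖ (Tensor A M N) :=
  ⟨fun c x => Tensor.rsmulAux A M N C c x⟩

lemma Tensor.rsmul_mk (c : Cᵐᵒᵖ) (t : TensorProduct ℤ M N) :
    c • (Tensor.q A M N t) =
      Tensor.q A M N ((LinearMap.lTensor M (AddMonoidHom.toIntLinearMap
        (DistribSMul.toAddMonoidHom N c))) t) := rfl

instance Tensor.instRightModule : Module Cᵐᵒᵖ (Tensor A M N) where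
  one_smul x := by
    obtain ⟨t, rfl⟩ := Tensor.q_surjective A M N x
    rw [Tensor.rsmul_mk]
    congr 1
    induction t with
    | zero => simp
    | tmul m n => simp
    | add x y hx hy => simp [map_add, hx, hy]
  mul_smul c d x := by
    obtain ⟨t, rfl⟩ := Tensor.q_surjective A M N x
    rw [Tensor.rsmul_mk, Tensor.rsmul_mk, Tensor.rsmul_mk]
    congr 1
    induction t with
    | zero => simp
    | tmul m n => simp [mul_smul]
    | add x y hx hy => simp only [map_add, hx, hy]
  smul_zero c := map_zero (Tensor.rsmulAux A M N C c)
  smul_add c x y := map_add (Tensor.rsmulAux A M N C c) x y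
  add_smul c d x := by
    obtain ⟨t, rfl⟩ := Tensor.q_surjective A M N x
    rw [Tensor.rsmul_mk, Tensor.rsmul_mk, Tensor.rsmul_mk, ← Tensor.q_add]
    congr 1
    induction t with
    | zero => simp
    | tmul m n => simp [add_smul, TensorProduct.tmul_add]
    | add x y hx hy => rw [map_add, hx, hy, map_add, map_add]; abel
  zero_smul x := by
    obtain ⟨t, rfl⟩ := Tensor.q_surjective A M N x
    rw [Tensor.rsmul_mk]
    show _ = Tensor.q A M N 0
    congr 1
    induction t with
    | zero => simp
    | tmul m n => simp
    | add x y hx hy => simp [map_add, hx, hy]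

instance Tensor.instSMulCommClass (B : Type*) [Ring B] [Module B M] [SMulCommClass Aᵐᵒᵖ B M] :
    SMulCommClass B Cᵐᵒᵖ (Tensor A M N) where
  smul_comm b c x := by
    obtain ⟨t, rfl⟩ := Tensor.q_surjective A M N x
    show Tensor.q A M N _ = Tensor.q A M N _
    congr 1
    induction t with
    | zero => rfl
    | tmul m n => rfl
    | add x y hx hy =>
      erw [map_add, map_add, hx, hy]
      first
        | (erw [map_add (AddMonoidHom.toIntLinearMap
            (DistribSMul.toAddMonoidHom (TensorProduct ℤ M N) b)) x y, map_add])
        | (rw [← map_add]; rfl)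

instance Tensor.instSMulCommClass' (B : Type*) [Ring B] [Module B M] [SMulCommClass Aᵐᵒᵖ B M] :
    SMulCommClass Cᵐᵒᵖ B (Tensor A M N) :=
  SMulCommClass.symm _ _ _

end Right

section Extra

variable (A : Type u) [Ring A]
variable (M : Type v) [AddCommGroup M] [Module Aᵐᵒᵖ M]
variable (N : Type w) [AddCommGroup N] [Module A N]

lemma Tensor.mk_balance (a : A) (m : M) (n : N) :
    Tensor.q A M N (m ⊗ₜ[ℤ] (a • n)) = Tensor.q A M N ((MulOpposite.op a • m) ⊗ₜ[ℤ] n) := by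
  show (Submodule.Quotient.mk _ : TensorProduct ℤ M N ⧸ tensorRel A M N) = Submodule.Quotient.mk _
  rw [Submodule.Quotient.eq, ← neg_sub]
  exact neg_mem (Submodule.subset_span ⟨a, m, n, rfl⟩)

lemma Tensor.lsmul_mk (B : Type*) [Ring B] [Module B M] [SMulCommClass Aᵐᵒᵖ B M]
    (b : B) (t : TensorProduct ℤ M N) :
    b • (Tensor.q A M N t) = Tensor.q A M N
      ((LinearMap.rTensor N (AddMonoidHom.toIntLinearMap
        (DistribSMul.toAddMonoidHom M b))) t) := rfl

instance Tensor.instTower (B S : Type*) [Ring B] [Ring S] [Module B M]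
    [SMulCommClass Aᵐᵒᵖ B M] [Module S M] [SMulCommClass Aᵐᵒᵖ S M] [SMul S B]
    [IsScalarTower S B M] : IsScalarTower S B (Tensor A M N) where
  smul_assoc s b x := by
    obtain ⟨t, rfl⟩ := Tensor.q_surjective A M N x
    rw [Tensor.lsmul_mk, Tensor.lsmul_mk, Tensor.lsmul_mk]
    congr 1
    have hmap : (AddMonoidHom.toIntLinearMap (DistribSMul.toAddMonoidHom M (s • b))) =
        (AddMonoidHom.toIntLinearMap (DistribSMul.toAddMonoidHom M s)).comp
          (AddMonoidHom.toIntLinearMap (DistribSMul.toAddMonoidHom M b)) := by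
      apply LinearMap.ext
      intro m
      exact smul_assoc s b m
    rw [hmap, LinearMap.rTensor_comp]
    rfl

end Extra

end NCT


/-! ## Generic module-theoretic notions -/

section Generic

variable (R : Type*) [Ring R]

/-- `M` is (isomorphic to) a direct summand of `W` as `R`-modules. -/
def IsDirectSummand (W M : Type*) [AddCommMonoid W] [AddCommMonoid M]
    [Module R W] [Module R M] : Prop :=
  ∃ (ι : M →ₗ[R] W) (p : W →ₗ[R] M), p.comp ι = LinearMap.id

/-- There exists an isomorphism of `R`-modules `X ≅ Y`. -/
def ModIsoNonempty (X Y : Type*) [AddCommMonoid X] [AddCommMonoid Y]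
    [Module R X] [Module R Y] : Prop :=
  ∃ e : X ≃+ Y, ∀ (r : R) (x : X), e (r • x) = r • e x

/-- There exists an isomorphism of `(B,C)`-bimodules `X ≅ Y` (right `C`-module structures
given as left `Cᵐᵒᵖ`-module structures). -/
def BimodIsoNonempty (B C : Type*) [Ring B] [Ring C] (X Y : Type*)
    [AddCommMonoid X] [AddCommMonoid Y] [Module B X] [Module Cᵐᵒᵖ X]
    [Module B Y] [Module Cᵐᵒᵖ Y] : Prop :=
  ∃ e : X ≃+ Y, (∀ (b : B) (x : X), e (b • x) = b • e x) ∧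
    (∀ (c : Cᵐᵒᵖ) (x : X), e (c • x) = c • e x)

/-- `M` is (isomorphic to) a direct summand of `W` as a `(B,C)`-bimodule. -/
def IsBimodDirectSummand (B C : Type*) [Ring B] [Ring C] (W M : Type*)
    [AddCommMonoid W] [AddCommMonoid M] [Module B W] [Module Cᵐᵒᵖ W]
    [Module B M] [Module Cᵐᵒᵖ M] : Prop :=
  ∃ (ι : M →+ W) (p : W →+ M),
    (∀ (b : B) (m : M), ι (b • m) = b • ι m) ∧
    (∀ (c : Cᵐᵒᵖ) (m : M), ι (c • m) = c • ι m) ∧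
    (∀ (b : B) (w : W), p (b • w) = b • p w) ∧
    (∀ (c : Cᵐᵒᵖ) (w : W), p (c • w) = c • p w) ∧
    p.comp ι = AddMonoidHom.id M

/-- An `R`-module is indecomposable if it is nonzero and its only idempotent endomorphisms
are `0` and the identity. -/
def IsIndecomposableModule (M : Type*) [AddCommMonoid M] [Module R M] : Prop :=
  Nontrivial M ∧ ∀ f : M →ₗ[R] M, f.comp f = f → f = 0 ∨ f = LinearMap.id

/-- A `(B,C)`-bimodule is indecomposable if it is nonzero and its only idempotent bimodule
endomorphisms are `0` and the identity. -/
def IsIndecomposableBimod (B C : Type*) [Ring B] [Ring C] (M : Type*) [AddCommMonoid M]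
    [Module B M] [Module Cᵐᵒᵖ M] : Prop :=
  Nontrivial M ∧ ∀ f : M →+ M, (∀ (b : B) (m : M), f (b • m) = b • f m) →
    (∀ (c : Cᵐᵒᵖ) (m : M), f (c • m) = c • f m) → f.comp f = f → f = 0 ∨ f = AddMonoidHom.id M

/-- An idempotent of a ring is primitive if it is nonzero and admits no decomposition as a sum
of two nonzero orthogonal idempotents. -/
def IsPrimitiveIdempotent (e : R) : Prop :=
  e * e = e ∧ e ≠ 0 ∧ ∀ c d : R, c * c = c → d * d = d → c * d = 0 → d * c = 0 →
    e = c + d → c = 0 ∨ d = 0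

/-- Two idempotents are conjugate if some unit conjugates one into the other. -/
def AreConjugateIdempotents (e f : R) : Prop :=
  ∃ u : Rˣ, (u : R) * e * (↑u⁻¹ : R) = f

end Generic

/-! ## Bimodules over a ring, and invertible bimodules -/

/-- A bundled `(A,A)`-bimodule. -/
structure BimodPack (A : Type u) [Ring A] : Type (u + 1) where
  V : Type u
  [acg : AddCommGroup V]
  [lmod : Module A V]
  [rmod : Module Aᵐᵒᵖ V]
  [comm : SMulCommClass A Aᵐᵒᵖ V]
  [comm' : SMulCommClass Aᵐᵒᵖ A V]

attribute [instance] BimodPack.acg BimodPack.lmod BimodPack.rmod BimodPack.comm BimodPack.comm'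

/-- An `(A,A)`-bimodule `M` is invertible if it is finitely generated projective as a left and
as a right `A`-module and there is a bimodule `N` with `M ⊗_A N ≅ A ≅ N ⊗_A M` as
`(A,A)`-bimodules. -/
def IsInvertibleBimod (A : Type u) [Ring A] (M : Type u) [AddCommGroup M] [Module A M]
    [Module Aᵐᵒᵖ M] [SMulCommClass A Aᵐᵒᵖ M] [SMulCommClass Aᵐᵒᵖ A M] : Prop :=
  Module.Finite A M ∧ Module.Projective A M ∧ Module.Finite Aᵐᵒᵖ M ∧ Module.Projective Aᵐᵒᵖ M ∧
  ∃ N : BimodPack A, (Module.Finite A N.V ∧ Module.Projective A N.V ∧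
      Module.Finite Aᵐᵒᵖ N.V ∧ Module.Projective Aᵐᵒᵖ N.V) ∧
    BimodIsoNonempty A A (Tensor A M N.V) A ∧ BimodIsoNonempty A A (Tensor A N.V M) A

/-! ## Group algebras and bimodules over them -/

section GroupAlgebra

/-- commutation of the action of an algebra with the action of scalars -/
lemma algebra_smul_comm {R A M : Type*} [CommSemiring R] [Semiring A] [Algebra R A]
    [AddCommMonoid M] [Module A M] [Module R M] [IsScalarTower R A M]
    (r : R) (a : A) (m : M) : a • r • m = r • a • m := by
  rw [← algebraMap_smul A r m, ← mul_smul, ← Algebra.commutes, mul_smul, algebraMap_smul]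

variable (O : Type u) [CommRing O]

/-- The group algebra of `G` over `O`. -/
abbrev GA (G : Type u) [Group G] : Type u := MonoidAlgebra O G

variable (G : Type u) [Group G]

/-- A bimodule over the group algebra `OG` is `O`-central if the left and right actions of `O`
agree. -/
class OCentralBimodule (M : Type u) [AddCommGroup M] [Module (GA O G)ᵐᵒᵖ M]
    [Module O M] : Prop where
  right_compat : ∀ (r : O) (m : M), MulOpposite.op (algebraMap O (GA O G) r) • m = r • m

section BiRep

variable (M : Type u) [AddCommGroup M] [Module (GA O G) M] [Module (GA O G)ᵐᵒᵖ M]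
  [SMulCommClass (GA O G) (GA O G)ᵐᵒᵖ M] [Module O M] [IsScalarTower O (GA O G) M]
  [OCentralBimodule O G M]

lemma ga_right_smul_comm (r : O) (a : (GA O G)ᵐᵒᵖ) (m : M) :
    a • r • m = r • a • m := by
  rw [← OCentralBimodule.right_compat (G := G) r m, ← mul_smul,
    ← OCentralBimodule.right_compat (G := G) r (a • m), ← mul_smul]
  congr 1
  rw [← MulOpposite.op_unop a, ← MulOpposite.op_mul, ← MulOpposite.op_mul, Algebra.commutes]

/-- The `O(G × G)`-module structure on an `OG`-`OG`-bimodule, given by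
`(x, y) • m = x • m • y⁻¹`. -/
def biRep : Representation O (G × G) M where
  toFun g :=
    { toFun := fun m =>
        (MonoidAlgebra.of O G g.1) • (MulOpposite.op (MonoidAlgebra.of O G g.2⁻¹) • m)
      map_add' := fun x y => by simp only [smul_add]
      map_smul' := fun r m => by
        simp only [RingHom.id_apply]
        rw [ga_right_smul_comm O G M, algebra_smul_comm] }
  map_one' := by
    ext m
    simp only [Prod.fst_one, Prod.snd_one, inv_one, map_one, LinearMap.coe_mk,
      AddHom.coe_mk, LinearMap.id_coe, id_eq]
    rw [MulOpposite.op_one, one_smul, one_smul]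
    exact (Module.End.one_apply m).symm
  map_mul' g h := by
    ext m
    simp only [Prod.fst_mul, Prod.snd_mul, LinearMap.coe_mk, AddHom.coe_mk, Module.End.mul_apply,
      mul_inv_rev, map_mul]
    rw [MulOpposite.op_mul, mul_smul, mul_smul]
    congr 1
    rw [smul_comm (MonoidAlgebra.of O G h.1)]

/-- An `OG`-`OG`-bimodule regarded as an `O(G × G)`-module. -/
abbrev DiagMod : Type u := (biRep O G M).asModule

end BiRep

instance {k G V : Type*} [CommSemiring k] [Monoid G] [AddCommGroup V] [Module k V]
    (rho : Representation k G V) : AddCommGroup rho.asModule :=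
  inferInstanceAs (AddCommGroup V)

/-- Restriction of a module over a group algebra along a group homomorphism. -/
def ResAlong {H K : Type u} [Group H] [Group K] (f : H →* K) (X : Type u)
    [AddCommMonoid X] [Module (MonoidAlgebra O K) X] : Type u := X

instance {H K : Type u} [Group H] [Group K] (f : H →* K) (X : Type u) [AddCommMonoid X]
    [Module (MonoidAlgebra O K) X] : AddCommMonoid (ResAlong O f X) :=
  inferInstanceAs (AddCommMonoid X)

instance ResAlong.instAddCommGroup {H K : Type u} [Group H] [Group K] (f : H →* K) (X : Type u)
    [AddCommGroup X] [Module (MonoidAlgebra O K) X] : AddCommGroup (ResAlong O f X) :=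
  inferInstanceAs (AddCommGroup X)

noncomputable instance {H K : Type u} [Group H] [Group K] (f : H →* K) (X : Type u)
    [AddCommMonoid X] [Module (MonoidAlgebra O K) X] :
    Module (MonoidAlgebra O H) (ResAlong O f X) :=
  Module.compHom X (MonoidAlgebra.mapDomainRingHom O f)

end GroupAlgebra

/-! ## Relative projectivity, vertices and sources -/

section Vertices

variable (O : Type u) [CommRing O]
variable {Gam : Type u} [Group Gam]

/-- The action of a group element on a module over the group algebra, as an additive map. -/
def gAct (X : Type u) [AddCommMonoid X] [Module (MonoidAlgebra O Gam) X] (g : Gam) : X →+ X :=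
  DistribSMul.toAddMonoidHom X (MonoidAlgebra.of O Gam g)

/-- An additive endomorphism of a module over `O Γ` which is `O`-linear and commutes with the
action of the subgroup `Q`, i.e. an `OQ`-endomorphism. -/
def IsRelEndo (Q : Subgroup Gam) (X : Type u) [AddCommMonoid X]
    [Module (MonoidAlgebra O Gam) X] (f : X →+ X) : Prop :=
  (∀ (r : O) (x : X), f (algebraMap O (MonoidAlgebra O Gam) r • x) =
      algebraMap O (MonoidAlgebra O Gam) r • f x) ∧
  ∀ g ∈ Q, ∀ x : X, f (gAct O X g x) = gAct O X g (f x)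

/-- The relative trace map `Tr_Q^Γ` on endomorphisms, using a set of representatives of the
left cosets `Γ/Q`. -/
noncomputable def relTrace [Finite Gam] (Q : Subgroup Gam) (X : Type u) [AddCommMonoid X]
    [Module (MonoidAlgebra O Gam) X] (f : X →+ X) : X →+ X :=
  letI : Fintype (Gam ⧸ Q) := Fintype.ofFinite _
  ∑ c : Gam ⧸ Q, (gAct O X c.out).comp (f.comp (gAct O X c.out⁻¹))

/-- Higman's criterion, as a definition: an `OΓ`-module is relatively `Q`-projective if the
identity is the relative trace of an `OQ`-endomorphism.  This is equivalent to `X` being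
isomorphic to a direct summand of `Ind_Q^Γ Res_Q X`. -/
noncomputable def IsRelativelyProjective [Finite Gam] (Q : Subgroup Gam) (X : Type u)
    [AddCommMonoid X] [Module (MonoidAlgebra O Gam) X] : Prop :=
  ∃ f : X →+ X, IsRelEndo O Q X f ∧ relTrace O Q X f = AddMonoidHom.id X

/-- `Q` is a vertex of the `OΓ`-module `X` if `X` is relatively `Q`-projective and `Q` is
minimal with this property. -/
noncomputable def IsVertex [Finite Gam] (Q : Subgroup Gam) (X : Type u) [AddCommMonoid X]
    [Module (MonoidAlgebra O Gam) X] : Prop :=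
  IsRelativelyProjective O Q X ∧
    ∀ Q' : Subgroup Gam, Q' ≤ Q → IsRelativelyProjective O Q' X → Q' = Q

/-- The right `OQ`-module structure on `OΓ` for a subgroup `Q` of `Γ`. -/
noncomputable instance (Q : Subgroup Gam) :
    Module (MonoidAlgebra O ↥Q)ᵐᵒᵖ (MonoidAlgebra O Gam) :=
  Module.compHom _ (RingHom.op (MonoidAlgebra.mapDomainRingHom O Q.subtype))

lemma opQ_smul_def (Q : Subgroup Gam) (a : (MonoidAlgebra O ↥Q)ᵐᵒᵖ)
    (x : MonoidAlgebra O Gam) :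
    a • x = x * (MonoidAlgebra.mapDomainRingHom O Q.subtype a.unop) := rfl

instance (Q : Subgroup Gam) :
    SMulCommClass (MonoidAlgebra O ↥Q)ᵐᵒᵖ (MonoidAlgebra O Gam) (MonoidAlgebra O Gam) where
  smul_comm a x y := by
    rw [opQ_smul_def, opQ_smul_def, smul_eq_mul, smul_eq_mul, mul_assoc]

/-- The induced module `Ind_Q^Γ V = OΓ ⊗_{OQ} V`. -/
noncomputable abbrev IndMod (Q : Subgroup Gam) (V : Type u) [AddCommGroup V]
    [Module (MonoidAlgebra O ↥Q) V] : Type u :=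
  Tensor (MonoidAlgebra O ↥Q) (MonoidAlgebra O Gam) V

/-- A bundled module over the group algebra `OH`, with compatible `O`-module structure. -/
structure QModPack (H : Type u) [Group H] : Type (u + 1) where
  V : Type u
  [acg : AddCommGroup V]
  [mod : Module (MonoidAlgebra O H) V]
  [omod : Module O V]
  [tower : IsScalarTower O (MonoidAlgebra O H) V]

attribute [instance] QModPack.acg QModPack.mod QModPack.omod QModPack.tower

/-- `(Q, W)` is a vertex-source pair of the `OΓ`-module `X`. -/
noncomputable def IsVertexSourcePair [Finite Gam] (Q : Subgroup Gam) (W : QModPack O ↥Q)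
    (X : Type u) [AddCommMonoid X] [Module (MonoidAlgebra O Gam) X] : Prop :=
  IsVertex O Q X ∧ IsIndecomposableModule (MonoidAlgebra O ↥Q) W.V ∧
    IsDirectSummand (MonoidAlgebra O Gam) (IndMod O Q W.V) X

/-- The action of a group element as an `O`-linear endomorphism. -/
def gEnd {H : Type u} [Group H] (V : Type u) [AddCommGroup V] [Module (MonoidAlgebra O H) V]
    [Module O V] [IsScalarTower O (MonoidAlgebra O H) V] (h : H) : V →ₗ[O] V where
  toFun v := MonoidAlgebra.of O H h • v
  map_add' := smul_add _
  map_smul' r v := by simp only [RingHom.id_apply]; exact algebra_smul_comm r _ v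

/-- A source `W` is an endopermutation module: it is a finitely generated free `O`-module such
that `End_O(W)` has an `O`-basis permuted by the conjugation action of the group. -/
noncomputable def IsEndopermutation {H : Type u} [Group H] (W : QModPack O H) : Prop :=
  Module.Free O W.V ∧ Module.Finite O W.V ∧
  ∃ (I : Type u) (bas : Module.Basis I O (Module.End O W.V)), ∀ (h : H) (i : I), ∃ j : I,
    (gEnd O W.V h) ∘ₗ (bas i) ∘ₗ (gEnd O W.V h⁻¹) = bas j

/-- The `OΓ`-module `X` has an endopermutation source. -/
noncomputable def HasEndopermutationSource (Gam : Type u) [Group Gam] [Finite Gam]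
    (X : Type u) [AddCommMonoid X] [Module (MonoidAlgebra O Gam) X] : Prop :=
  ∃ (Q : Subgroup Gam) (W : QModPack O ↥Q), IsVertexSourcePair O Q W X ∧
    IsEndopermutation O W

/-- The `OΓ`-module `X` has a linear source (a source of `O`-rank 1). -/
noncomputable def HasLinearSource (Gam : Type u) [Group Gam] [Finite Gam]
    (X : Type u) [AddCommMonoid X] [Module (MonoidAlgebra O Gam) X] : Prop :=
  ∃ (Q : Subgroup Gam) (W : QModPack O ↥Q), IsVertexSourcePair O Q W X ∧
    Module.Free O W.V ∧ Module.rank O W.V = 1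

/-- The `OΓ`-module `X` has a trivial source. -/
noncomputable def HasTrivialSource (Gam : Type u) [Group Gam] [Finite Gam]
    (X : Type u) [AddCommMonoid X] [Module (MonoidAlgebra O Gam) X] : Prop :=
  ∃ (Q : Subgroup Gam) (W : QModPack O ↥Q), IsVertexSourcePair O Q W X ∧
    ∃ e : W.V ≃ₗ[O] O, ∀ (q : ↥Q) (v : W.V), e (MonoidAlgebra.of O ↥Q q • v) = e v

end Vertices

/-! ## Blocks, block bimodules, defect groups -/

section Blocks

variable (O : Type u) [CommRing O] (G : Type u) [Group G]

/-- `b` is a block idempotent of `OG`: a nonzero central idempotent which is primitive in the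
centre of `OG`. -/
def IsBlockIdem (b : GA O G) : Prop :=
  b * b = b ∧ b ≠ 0 ∧ (∀ x, b * x = x * b) ∧
    ∀ c d : GA O G, c * c = c → d * d = d → (∀ x, c * x = x * c) → (∀ x, d * x = x * d) →
      c * d = 0 → b = c + d → c = 0 ∨ d = 0

/-- Class recording that an element of the group algebra is central. -/
class CentralElem (b : GA O G) : Prop where
  comm : ∀ x, b * x = x * b

/-- The block algebra `OGb` as a right submodule of `OG`. -/
def blockSub (b : GA O G) : Submodule (GA O G)ᵐᵒᵖ (GA O G) where
  carrier := {x | b * x = x}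
  add_mem' := by
    intro x y hx hy
    show b * _ = _
    rw [mul_add, hx, hy]
  zero_mem' := by show b * 0 = 0; rw [mul_zero]
  smul_mem' := by
    intro a x hx
    show b * (x * a.unop) = x * a.unop
    rw [← mul_assoc, hx]

/-- The block algebra `B = OGb`, as an `OG`-`OG`-bimodule. -/
def BlockMod (b : GA O G) : Type u := ↥(blockSub O G b)

instance (b : GA O G) : AddCommGroup (BlockMod O G b) :=
  inferInstanceAs (AddCommGroup ↥(blockSub O G b))

instance (b : GA O G) : Module (GA O G)ᵐᵒᵖ (BlockMod O G b) :=
  inferInstanceAs (Module (GA O G)ᵐᵒᵖ ↥(blockSub O G b))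

instance (b : GA O G) [CentralElem O G b] : Module (GA O G) (BlockMod O G b) where
  smul a x := ⟨a * x.1, by
    show b * _ = _
    rw [← mul_assoc, CentralElem.comm (b := b) a, mul_assoc, x.2]⟩
  one_smul x := Subtype.ext (one_mul x.1)
  mul_smul a c x := Subtype.ext (mul_assoc a c x.1)
  smul_zero a := Subtype.ext (mul_zero a)
  smul_add a x y := Subtype.ext (mul_add a x.1 y.1)
  add_smul a c x := Subtype.ext (add_mul a c x.1)
  zero_smul x := Subtype.ext (zero_mul x.1)

lemma blockMod_lsmul_def (b : GA O G) [CentralElem O G b] (a : GA O G)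
    (x : BlockMod O G b) : (a • x).1 = a * x.1 := rfl

lemma blockMod_rsmul_def (b : GA O G) (a : (GA O G)ᵐᵒᵖ) (x : BlockMod O G b) :
    (a • x).1 = x.1 * a.unop := rfl

instance (b : GA O G) [CentralElem O G b] :
    SMulCommClass (GA O G) (GA O G)ᵐᵒᵖ (BlockMod O G b) where
  smul_comm a c x := by
    apply Subtype.ext
    rw [blockMod_lsmul_def, blockMod_rsmul_def, blockMod_rsmul_def, blockMod_lsmul_def,
      mul_assoc]

instance (b : GA O G) [CentralElem O G b] :
    SMulCommClass (GA O G)ᵐᵒᵖ (GA O G) (BlockMod O G b) :=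
  SMulCommClass.symm _ _ _

instance (b : GA O G) [CentralElem O G b] : Module O (BlockMod O G b) :=
  Module.compHom _ (algebraMap O (GA O G))

lemma blockMod_osmul_def (b : GA O G) [CentralElem O G b] (r : O) (x : BlockMod O G b) :
    (r • x).1 = algebraMap O (GA O G) r * x.1 := rfl

instance (b : GA O G) [CentralElem O G b] :
    IsScalarTower O (GA O G) (BlockMod O G b) where
  smul_assoc r a x := by
    apply Subtype.ext
    rw [blockMod_lsmul_def, blockMod_osmul_def, blockMod_lsmul_def, ← mul_assoc,
      ← Algebra.smul_def]

instance (b : GA O G) [CentralElem O G b] : OCentralBimodule O G (BlockMod O G b) where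
  right_compat r x := by
    apply Subtype.ext
    rw [blockMod_rsmul_def, blockMod_osmul_def, MulOpposite.unop_op, ← Algebra.commutes]

/-- A bimodule over the group algebra `OG` with compatible `O`-structure, bundled. -/
structure GBimodPack : Type (u + 1) where
  V : Type u
  [acg : AddCommGroup V]
  [lmod : Module (GA O G) V]
  [rmod : Module (GA O G)ᵐᵒᵖ V]
  [comm : SMulCommClass (GA O G) (GA O G)ᵐᵒᵖ V]
  [comm' : SMulCommClass (GA O G)ᵐᵒᵖ (GA O G) V]
  [omod : Module O V]
  [tower : IsScalarTower O (GA O G) V]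
  [ocentral : OCentralBimodule O G V]
  [ocomm : SMulCommClass (GA O G)ᵐᵒᵖ O V]

attribute [instance] GBimodPack.acg GBimodPack.lmod GBimodPack.rmod GBimodPack.comm
  GBimodPack.comm' GBimodPack.omod GBimodPack.tower GBimodPack.ocentral GBimodPack.ocomm

/-- The tensor product over the block algebra of two unital `O`-central bimodules is again
`O`-central. -/
instance (M N : Type u) [AddCommGroup M] [AddCommGroup N]
    [Module (GA O G) M] [Module (GA O G)ᵐᵒᵖ M] [SMulCommClass (GA O G)ᵐᵒᵖ (GA O G) M]
    [Module O M] [SMulCommClass (GA O G)ᵐᵒᵖ O M] [OCentralBimodule O G M]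
    [Module (GA O G) N] [Module (GA O G)ᵐᵒᵖ N] [SMulCommClass (GA O G) (GA O G)ᵐᵒᵖ N]
    [Module O N] [IsScalarTower O (GA O G) N] [OCentralBimodule O G N] :
    OCentralBimodule O G (Tensor (GA O G) M N) where
  right_compat r x := by
    obtain ⟨t, rfl⟩ := Tensor.q_surjective _ _ _ x
    rw [Tensor.rsmul_mk, Tensor.lsmul_mk]
    congr 0
    induction t with
    | zero => simp only [map_zero]
    | tmul m n =>
      simp only [LinearMap.lTensor_tmul, LinearMap.rTensor_tmul,
        AddMonoidHom.coe_toIntLinearMap, DistribSMul.toAddMonoidHom_apply]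
      rw [OCentralBimodule.right_compat (G := G) r n, ← algebraMap_smul (GA O G) r n,
        Tensor.mk_balance, OCentralBimodule.right_compat (G := G) r m]
    | add y z hy hz =>
      simp only [map_add, Tensor.q_add, hy, hz]

/-- The bimodule `M` is unital over the block determined by `b`, i.e. `b` acts as identity on
both sides; such bimodules are exactly the `B`-`B`-bimodules for `B = OGb`. -/
def IsBlockBimod (b : GA O G) (M : Type u) [AddCommGroup M] [Module (GA O G) M]
    [Module (GA O G)ᵐᵒᵖ M] : Prop :=
  (∀ m : M, b • m = m) ∧ ∀ m : M, MulOpposite.op b • m = m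

/-- `M` is an invertible `B`-`B`-bimodule for the block algebra `B = OGb`: it is unital over
the block, finitely generated projective on both sides, and has a tensor inverse `N` with
`M ⊗_B N ≅ B ≅ N ⊗_B M`. (For unital bimodules, tensoring over `OG` agrees with tensoring
over `B`.) -/
def IsInvertibleBlockBimod (b : GA O G) [CentralElem O G b] (M : Type u) [AddCommGroup M]
    [Module (GA O G) M] [Module (GA O G)ᵐᵒᵖ M] [SMulCommClass (GA O G) (GA O G)ᵐᵒᵖ M]
    [SMulCommClass (GA O G)ᵐᵒᵖ (GA O G) M] : Prop :=
  IsBlockBimod O G b M ∧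
  Module.Finite (GA O G) M ∧ Module.Projective (GA O G) M ∧
  Module.Finite (GA O G)ᵐᵒᵖ M ∧ Module.Projective (GA O G)ᵐᵒᵖ M ∧
  ∃ N : GBimodPack O G, IsBlockBimod O G b N.V ∧
    BimodIsoNonempty (GA O G) (GA O G) (Tensor (GA O G) M N.V) (BlockMod O G b) ∧
    BimodIsoNonempty (GA O G) (GA O G) (Tensor (GA O G) N.V M) (BlockMod O G b)

/-- The diagonal copy of a subgroup `P ≤ G` inside `G × G`. -/
def diagSub (P : Subgroup G) : Subgroup (G × G) :=
  P.map ((MonoidHom.id G).prod (MonoidHom.id G))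

/-- `P` is a defect group of the block `b`: the diagonal subgroup `ΔP` is a vertex of the
block algebra `B = OGb` regarded as an `O(G × G)`-module. -/
noncomputable def IsDefectGroup [Finite G] (P : Subgroup G) (b : GA O G)
    [CentralElem O G b] : Prop :=
  IsBlockIdem O G b ∧ IsVertex O (diagSub G P) (DiagMod O G (BlockMod O G b))

end Blocks
/-! ## Corner rings `eRe` and source algebras -/

section Corner

variable {R : Type u} [Ring R]

/-- An idempotent element of a ring, bundled with the proof of idempotency. -/
structure Idem (R : Type u) [Ring R] : Type u where
  val : R
  idem : val * val = val

/-- The additive subgroup underlying the corner ring `eRe`. -/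
def cornerAddSubgroup (e : Idem R) : AddSubgroup R where
  carrier := {x | e.val * x = x ∧ x * e.val = x}
  add_mem' := by
    rintro x y ⟨hx1, hx2⟩ ⟨hy1, hy2⟩
    constructor
    · rw [mul_add, hx1, hy1]
    · rw [add_mul, hx2, hy2]
  zero_mem' := by constructor <;> simp
  neg_mem' := by
    rintro x ⟨hx1, hx2⟩
    constructor
    · rw [mul_neg, hx1]
    · rw [neg_mul, hx2]

/-- The corner ring `eRe` of an idempotent `e`, a unital ring with unit `e`. -/
def Corner (e : Idem R) : Type u := ↥(cornerAddSubgroup e)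

namespace Corner

variable (e : Idem R)

instance : AddCommGroup (Corner e) :=
  inferInstanceAs (AddCommGroup ↥(cornerAddSubgroup e))

instance : Ring (Corner e) :=
  { (inferInstance : AddCommGroup (Corner e)) with
    mul := fun x y => ⟨x.1 * y.1, by
      constructor
      · rw [← mul_assoc, x.2.1]
      · rw [mul_assoc, y.2.2]⟩
    one := ⟨e.val, e.idem, e.idem⟩
    mul_assoc := fun x y z => Subtype.ext (mul_assoc x.1 y.1 z.1)
    one_mul := fun x => Subtype.ext x.2.1
    mul_one := fun x => Subtype.ext x.2.2
    left_distrib := fun x y z => Subtype.ext (mul_add x.1 y.1 z.1)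
    right_distrib := fun x y z => Subtype.ext (add_mul x.1 y.1 z.1)
    zero_mul := fun x => Subtype.ext (zero_mul x.1)
    mul_zero := fun x => Subtype.ext (mul_zero x.1) }

@[simp] lemma mul_val (x y : Corner e) : (x * y).1 = x.1 * y.1 := rfl

@[simp] lemma one_val : (1 : Corner e).1 = e.val := rfl

@[simp] lemma add_val (x y : Corner e) : (x + y).1 = x.1 + y.1 := rfl

variable {O : Type u} [CommRing O] [Algebra O R]

instance : Module O (Corner e) where
  smul r x := ⟨r • x.1, by
    constructor
    · rw [mul_smul_comm, x.2.1]
    · rw [smul_mul_assoc, x.2.2]⟩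
  one_smul x := Subtype.ext (one_smul O x.1)
  mul_smul r s x := Subtype.ext (mul_smul r s x.1)
  smul_zero r := Subtype.ext (smul_zero r)
  smul_add r x y := Subtype.ext (smul_add r x.1 y.1)
  add_smul r s x := Subtype.ext (add_smul r s x.1)
  zero_smul x := Subtype.ext (zero_smul O x.1)

@[simp] lemma smul_val (r : O) (x : Corner e) : (r • x).1 = r • x.1 := rfl

instance : Algebra O (Corner e) where
  algebraMap :=
  { toFun r := ⟨r • e.val, by
      constructor
      · rw [mul_smul_comm, e.idem]
      · rw [smul_mul_assoc, e.idem]⟩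
    map_one' := Subtype.ext (one_smul O e.val)
    map_mul' r s := Subtype.ext <| by
      show (r * s) • e.val = (r • e.val) * (s • e.val)
      rw [smul_mul_assoc, mul_smul_comm, e.idem, mul_smul]
    map_zero' := Subtype.ext (zero_smul O e.val)
    map_add' r s := Subtype.ext (add_smul r s e.val) }
  commutes' r x := Subtype.ext <| by
    show (r • e.val) * x.1 = x.1 * (r • e.val)
    rw [smul_mul_assoc, mul_smul_comm, x.2.1, x.2.2]
  smul_def' r x := Subtype.ext <| by
    show r • x.1 = (r • e.val) * x.1
    rw [smul_mul_assoc, x.2.1]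

end Corner

end Corner

section SourceAlgebra

variable (O : Type u) [CommRing O] (k : Type u) [Field k] (G : Type u) [Group G]

/-- Nonvanishing of the Brauer quotient `Br_P(x)` of a `P`-fixed element `x` of `OG`: some
coefficient of `x` at an element of `C_G(P)` is nonzero in the residue field `k`. -/
def BrauerNonzero (κ : O →+* k) (P : Subgroup G) (x : GA O G) : Prop :=
  ∃ g ∈ Subgroup.centralizer (P : Set G), κ (x.coeff g) ≠ 0

/-- A source idempotent for the block `b` with defect group `P`: a primitive idempotent `i`
of `B^P = (OGb)^P` with `Br_P(i) ≠ 0`. -/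
structure SourceIdemData (κ : O →+* k) (P : Subgroup G) (b : GA O G) : Type u where
  i : GA O G
  idem : i * i = i
  mem : b * i = i
  fixes : ∀ u ∈ P, MonoidAlgebra.of O G u * i = i * MonoidAlgebra.of O G u
  ne_zero : i ≠ 0
  primitive : ∀ c d : GA O G,
    (b * c = c ∧ ∀ u ∈ P, MonoidAlgebra.of O G u * c = c * MonoidAlgebra.of O G u) →
    (b * d = d ∧ ∀ u ∈ P, MonoidAlgebra.of O G u * d = d * MonoidAlgebra.of O G u) →
    c * c = c → d * d = d → c * d = 0 → d * c = 0 → i = c + d → c = 0 ∨ d = 0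
  brauer : BrauerNonzero O k G κ P i

variable {O k G}

/-- The source algebra `A = iBi = i(OG)i` attached to a source idempotent. -/
def SourceIdemData.A {κ : O →+* k} {P : Subgroup G} {b : GA O G}
    (D : SourceIdemData O k G κ P b) : Type u :=
  Corner (R := GA O G) ⟨D.i, D.idem⟩

instance {κ : O →+* k} {P : Subgroup G} {b : GA O G} (D : SourceIdemData O k G κ P b) :
    Ring D.A := inferInstanceAs (Ring (Corner ⟨D.i, D.idem⟩))

instance {κ : O →+* k} {P : Subgroup G} {b : GA O G} (D : SourceIdemData O k G κ P b) :
    Algebra O D.A := inferInstanceAs (Algebra O (Corner ⟨D.i, D.idem⟩))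

/-- The structural map `P → A^×` of the source algebra as an interior `P`-algebra,
`u ↦ i u i = u i`. -/
def SourceIdemData.pUnit {κ : O →+* k} {P : Subgroup G} {b : GA O G}
    (D : SourceIdemData O k G κ P b) : ↥P →* D.A where
  toFun u := ⟨MonoidAlgebra.of O G (u : G) * D.i, by
    constructor
    · rw [← mul_assoc, ← D.fixes u.1 u.2, mul_assoc, D.idem]
    · rw [mul_assoc, D.idem]⟩
  map_one' := Subtype.ext <| by
    show MonoidAlgebra.of O G ((1 : ↥P) : G) * D.i = D.i
    rw [OneMemClass.coe_one, map_one, one_mul]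
  map_mul' u v := Subtype.ext <| by
    show MonoidAlgebra.of O G ((u * v : ↥P) : G) * D.i =
      (MonoidAlgebra.of O G (u : G) * D.i) * (MonoidAlgebra.of O G (v : G) * D.i)
    rw [mul_assoc (MonoidAlgebra.of O G (u : G)) D.i,
      ← mul_assoc D.i (MonoidAlgebra.of O G (v : G)) D.i,
      ← D.fixes (v : G) v.2, mul_assoc (MonoidAlgebra.of O G (v : G)) D.i D.i, D.idem,
      Subgroup.coe_mul, map_mul, mul_assoc]

end SourceAlgebra
/-! ## The source algebra as an interior `P`-algebra; fusion -/

section SourceAlgebraTwo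

variable {O k : Type u} [CommRing O] [Field k] {G : Type u} [Group G]
variable {κ : O →+* k} {P : Subgroup G} {b : GA O G}

/-- The algebra map `OP → A` induced by the structural map `P → A^×`. -/
noncomputable def SourceIdemData.pAlgHom (D : SourceIdemData O k G κ P b) :
    MonoidAlgebra O ↥P →ₐ[O] D.A :=
  (MonoidAlgebra.lift O D.A ↥P) D.pUnit

/-- The left `OP`-module structure of the source algebra. -/
noncomputable instance (D : SourceIdemData O k G κ P b) :
    Module (MonoidAlgebra O ↥P) D.A :=
  Module.compHom D.A D.pAlgHom.toRingHom

lemma SourceIdemData.lsmul_def (D : SourceIdemData O k G κ P b)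
    (a : MonoidAlgebra O ↥P) (x : D.A) : a • x = D.pAlgHom a * x := rfl

/-- The right `OP`-module structure of the source algebra. -/
noncomputable instance (D : SourceIdemData O k G κ P b) :
    Module (MonoidAlgebra O ↥P)ᵐᵒᵖ D.A :=
  Module.compHom D.A (RingHom.op D.pAlgHom.toRingHom)

lemma SourceIdemData.rsmul_def (D : SourceIdemData O k G κ P b)
    (a : (MonoidAlgebra O ↥P)ᵐᵒᵖ) (x : D.A) : a • x = x * D.pAlgHom a.unop := rfl

instance (D : SourceIdemData O k G κ P b) :
    SMulCommClass (MonoidAlgebra O ↥P) (MonoidAlgebra O ↥P)ᵐᵒᵖ D.A where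
  smul_comm a c x := by
    rw [D.lsmul_def, D.rsmul_def, D.rsmul_def, D.lsmul_def, mul_assoc]

instance (D : SourceIdemData O k G κ P b) :
    SMulCommClass (MonoidAlgebra O ↥P)ᵐᵒᵖ (MonoidAlgebra O ↥P) D.A :=
  SMulCommClass.symm _ _ _

instance (D : SourceIdemData O k G κ P b) :
    IsScalarTower O (MonoidAlgebra O ↥P) D.A where
  smul_assoc r a x := by
    rw [D.lsmul_def, D.lsmul_def, map_smul, smul_mul_assoc]

instance (D : SourceIdemData O k G κ P b) : OCentralBimodule O ↥P D.A where
  right_compat r x := by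
    rw [D.rsmul_def, MulOpposite.unop_op, AlgHom.commutes, ← Algebra.commutes,
      ← Algebra.smul_def]

instance (D : SourceIdemData O k G κ P b) :
    SMulCommClass (MonoidAlgebra O ↥P)ᵐᵒᵖ O D.A where
  smul_comm c r x := by
    rw [D.rsmul_def, D.rsmul_def, smul_mul_assoc]

instance (D : SourceIdemData O k G κ P b) :
    SMulCommClass (MonoidAlgebra O ↥P) D.Aᵐᵒᵖ D.A where
  smul_comm a c x := by
    rw [D.lsmul_def, D.lsmul_def]
    show D.pAlgHom a * (x * c.unop) = (D.pAlgHom a * x) * c.unop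
    rw [mul_assoc]

/-- `ψ ∈ Aut_F(P)`, characterised on the source algebra: `A ≅ A_ψ` as `A`-`OP`-bimodules
(Linckelmann, Theorem 8.7.4). -/
def SourceIdemData.FusesAut (D : SourceIdemData O k G κ P b) (ψ : ↥P ≃* ↥P) : Prop :=
  ∃ e : D.A ≃+ D.A, (∀ a x : D.A, e (a * x) = a * e x) ∧
    ∀ (x : D.A) (u : ↥P), e (x * D.pUnit u) = e x * D.pUnit (ψ u)

/-- `φ ∈ Aut(P, F)`: `φ` stabilises the fusion system `F` of the block determined by the
source algebra, characterised on the source algebra: `A ≅ _φA_φ` as `OP`-`OP`-bimodules. -/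
def SourceIdemData.StabilizesFusion (D : SourceIdemData O k G κ P b)
    (φ : ↥P ≃* ↥P) : Prop :=
  ∃ e : D.A ≃+ D.A, (∀ (r : O) (x : D.A), e (r • x) = r • e x) ∧
    (∀ (u : ↥P) (x : D.A), e (D.pUnit u * x) = D.pUnit (φ u) * e x) ∧
    ∀ (x : D.A) (u : ↥P), e (x * D.pUnit u) = e x * D.pUnit (φ u)

/-- Equality of the classes of `φ, φ'` in `Out(P, F) = Aut(P, F)/Aut_F(P)`. -/
def SourceIdemData.OutPFEq (D : SourceIdemData O k G κ P b)
    (φ φ' : ↥P ≃* ↥P) : Prop :=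
  ∃ ψ : ↥P ≃* ↥P, D.FusesAut ψ ∧ ∀ u : ↥P, φ' u = φ (ψ u)

/-- A bundled `A`-`A`-bimodule over the source algebra. -/
structure ABimodPack (D : SourceIdemData O k G κ P b) : Type (u + 1) where
  V : Type u
  [acg : AddCommGroup V]
  [lmod : Module D.A V]
  [rmod : Module D.Aᵐᵒᵖ V]
  [comm : SMulCommClass D.A D.Aᵐᵒᵖ V]
  [comm' : SMulCommClass D.Aᵐᵒᵖ D.A V]

attribute [instance] ABimodPack.acg ABimodPack.lmod ABimodPack.rmod ABimodPack.comm
  ABimodPack.comm'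

/-- `M` represents an element of `T(A)`, the subgroup of `Pic(A)` corresponding to the
trivial source Picard group `T(B)` under the Morita equivalence `X ↦ iXi` between `B` and
the source algebra `A`: `M` is isomorphic to `iXi` for some trivial source invertible
`B`-`B`-bimodule `X`. -/
noncomputable def SourceIdemData.RepresentsTA [Finite G] [CentralElem O G b]
    (D : SourceIdemData O k G κ P b) (M : Type u) [AddCommGroup M] [Module D.A M]
    [Module D.Aᵐᵒᵖ M] : Prop :=
  ∃ X : GBimodPack O G, IsInvertibleBlockBimod O G b X.V ∧
    HasTrivialSource O (G × G) (DiagMod O G X.V) ∧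
    ∃ e : M →+ X.V, Function.Injective e ∧
      (∀ m : M, D.i • e m = e m ∧ MulOpposite.op D.i • e m = e m) ∧
      (∀ x : X.V, D.i • x = x → MulOpposite.op D.i • x = x → x ∈ Set.range e) ∧
      (∀ (a : D.A) (m : M), e (a • m) = a.1 • e m) ∧
      (∀ (a : D.A) (m : M), e (MulOpposite.op a • m) = MulOpposite.op a.1 • e m)

/-- The `A`-`OP`-bimodule `A_φ` for an automorphism `φ` of `P`: the source algebra with
right `P`-action twisted by `φ`. -/
@[nolint unusedArguments]
def SourceIdemData.Atw (D : SourceIdemData O k G κ P b) (_φ : ↥P ≃* ↥P) : Type u := D.A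

namespace SourceIdemData

variable (D : SourceIdemData O k G κ P b) (φ : ↥P ≃* ↥P)

/-- The underlying element of the source algebra. -/
def Atw.un (x : D.Atw φ) : D.A := x

instance : AddCommGroup (D.Atw φ) := inferInstanceAs (AddCommGroup D.A)

instance : Module D.A (D.Atw φ) := inferInstanceAs (Module D.A D.A)

/-- The twisted right `OP`-action on `A_φ`. -/
noncomputable instance : Module (MonoidAlgebra O ↥P)ᵐᵒᵖ (D.Atw φ) :=
  Module.compHom D.A (RingHom.op ((MonoidAlgebra.lift O D.A ↥P)
    (D.pUnit.comp φ.toMonoidHom)).toRingHom)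

lemma Atw_rsmul_def (a : (MonoidAlgebra O ↥P)ᵐᵒᵖ) (x : D.Atw φ) :
    a • x = Atw.un D φ x *
      ((MonoidAlgebra.lift O D.A ↥P) (D.pUnit.comp φ.toMonoidHom)) a.unop := rfl

instance : SMulCommClass (MonoidAlgebra O ↥P)ᵐᵒᵖ D.A (D.Atw φ) where
  smul_comm c a x := by
    show (((RingHom.op ((MonoidAlgebra.lift O D.A ↥P)
        (D.pUnit.comp φ.toMonoidHom)).toRingHom) c) • (a * Atw.un D φ x) : D.A) =
      a * (((RingHom.op ((MonoidAlgebra.lift O D.A ↥P)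
        (D.pUnit.comp φ.toMonoidHom)).toRingHom) c) • Atw.un D φ x : D.A)
    rw [MulOpposite.smul_eq_mul_unop, MulOpposite.smul_eq_mul_unop, mul_assoc]

/-- The `A`-`A`-bimodule `A_φ ⊗_{OP} A`. -/
noncomputable def AtwTensorA : Type u :=
  Tensor (MonoidAlgebra O ↥P) (D.Atw φ) D.A

noncomputable instance : AddCommGroup (D.AtwTensorA φ) :=
  inferInstanceAs (AddCommGroup (Tensor (MonoidAlgebra O ↥P) (D.Atw φ) D.A))

noncomputable instance : Module D.A (D.AtwTensorA φ) :=
  inferInstanceAs (Module D.A (Tensor (MonoidAlgebra O ↥P) (D.Atw φ) D.A))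

noncomputable instance : Module D.Aᵐᵒᵖ (D.AtwTensorA φ) :=
  inferInstanceAs (Module D.Aᵐᵒᵖ (Tensor (MonoidAlgebra O ↥P) (D.Atw φ) D.A))

end SourceIdemData

end SourceAlgebraTwo
/-! ## Puig's embedding of the Brauer correspondent source algebra -/

section Puig

variable (O k : Type u) [CommRing O] [Field k] (G : Type u) [Group G] [Finite G]
variable (κ : O →+* k) (P : Subgroup G) (b : GA O G)

/-- A twisted diagonal subgroup `Δ(ψ, R) = {(ψ r, r) | r ∈ R}` of `P × P` of order `< |P|`. -/
def IsSmallTwistedDiagonal (Q : Subgroup (↥P × ↥P)) : Prop :=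
  ∃ (R : Subgroup ↥P) (ψ : ↥R →* ↥P), Function.Injective ψ ∧
    Q = (ψ.prod R.subtype).range ∧ Nat.card ↥R < Nat.card ↥P

variable [CentralElem O G b]

set_option maxHeartbeats 1000000 in
set_option synthInstance.maxHeartbeats 400000 in
/-- Data recording Puig's canonical embedding `L → A` of a source algebra
`L ≅ O_τ(P ⋊ E)` of the Brauer correspondent of `b` into the source algebra `A = iBi`,
together with its characteristic properties: `L` contains the image of `P`, `L` has an
`O`-basis indexed by `P ⋊ E` (with `E` the inertial quotient, a `p′`-group acting on `P`)
whose multiplication is twisted by a 2-cocycle `τ` on `E`, the embedding is split as a map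
of `L`-`L`-bimodules (with complement `compl`), and the complement is relatively projective,
as an `O(P × P)`-module, with respect to twisted diagonal subgroups of `P × P` of order
strictly smaller than `|P|` (Puig; cf. Proposition 2.6 of the paper). -/
structure PuigEmbedData (p : ℕ) : Type (u + 1) where
  D : SourceIdemData O k G κ P b
  E : Type u
  [grpE : Group E]
  [finE : Fintype E]
  ord_coprime : ¬ p ∣ Nat.card E
  act : E →* MulAut ↥P
  τ : E → E → Oˣ
  cocycle : ∀ x y z : E, τ x y * τ (x * y) z = τ y z * τ x (y * z)
  τ_one : ∀ x : E, τ 1 x = 1 ∧ τ x 1 = 1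
  L : Subalgebra O D.A
  punit_mem : ∀ u : ↥P, D.pUnit u ∈ L
  bas : ↥P × E → D.A
  bas_mem : ∀ w : ↥P × E, bas w ∈ L
  bas_one : ∀ u : ↥P, bas (u, 1) = D.pUnit u
  bas_mul : ∀ (u v : ↥P) (x y : E),
    bas (u, x) * bas (v, y) = (τ x y : O) • bas (u * act x v, x * y)
  bas_indep : LinearIndependent O bas
  bas_span : ∀ l : D.A, l ∈ L → l ∈ Submodule.span O (Set.range bas)
  compl : Submodule O D.A
  compl_inf : Subalgebra.toSubmodule L ⊓ compl = ⊥
  compl_sup : Subalgebra.toSubmodule L ⊔ compl = ⊤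
  compl_stable : ∀ l ∈ L, ∀ a ∈ compl, l * a ∈ compl ∧ a * l ∈ compl
  compl_small : ∃ (n : ℕ) (Qf : Fin n → Subgroup (↥P × ↥P)),
    (∀ i, IsSmallTwistedDiagonal G P (Qf i)) ∧
    ∃ θ : Fin n → (DiagMod O ↥P D.A →+ DiagMod O ↥P D.A),
      (∀ i, IsRelEndo O (Qf i) (DiagMod O ↥P D.A) (θ i)) ∧
      (∀ i, ∀ a : D.A, a ∈ compl → (show D.A from θ i a) ∈ compl) ∧
      ∀ a : D.A, a ∈ compl →
        (show D.A from (∑ i, relTrace O (Qf i) (DiagMod O ↥P D.A) (θ i)) a) = a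

attribute [instance] PuigEmbedData.grpE PuigEmbedData.finE

end Puig

/-- The `k`-algebra `A` is split: the only `A`-endomorphisms of a simple `A`-module are the
scalars from `k`. -/
def IsSplitAlgebra (k A : Type u) [Field k] [Ring A] [Algebra k A] : Prop :=
  ∀ (S : Type u) [AddCommGroup S] [Module A S] [Module k S] [IsScalarTower k A S],
    IsSimpleModule A S → ∀ φ : S →ₗ[A] S, ∃ c : k, ∀ s : S, φ s = c • s

/-! Write `u_x = bas (1, x)` for the elements of `L` lifting the inertial quotient `E` and
`v_x = γ(u_x)`.  Both families satisfy the same twisted relations `u_x u_y = τ(x,y) u_{xy}`, so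
the average `c = |E|⁻¹ ∑ₓ u_x v_x⁻¹`, which makes sense because `E` is a `p'`-group, satisfies
`u_y c = c v_y`.  Since `γ` fixes `P` and `v_x ≡ u_x` modulo `π`, the element `c` commutes with
`P` and lies in `1 + πA`, hence in `1 + πA^P` as `A` has no `π`-torsion; it is a unit by
Nakayama's lemma.  As `L` is spanned by the products `u u_x` with `u ∈ P`, the map `γ` is
conjugation by `c`. -/

namespace Corner

variable {R O : Type u} [Ring R] [CommRing O] [Algebra O R] (e : Idem R)

def peirceₗ : R →ₗ[O] Corner e where
  toFun x := ⟨e.val * x * e.val, by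
    constructor
    · rw [← mul_assoc, ← mul_assoc, e.idem]
    · rw [mul_assoc, e.idem]⟩
  map_add' x y := Subtype.ext <| by
    show e.val * (x + y) * e.val = e.val * x * e.val + e.val * y * e.val
    rw [mul_add, add_mul]
  map_smul' r x := Subtype.ext <| by
    show e.val * (r • x) * e.val = r • (e.val * x * e.val)
    rw [mul_smul_comm, smul_mul_assoc]

lemma peirceₗ_surjective : Function.Surjective (peirceₗ (O := O) e) :=
  fun x => ⟨x.1, Subtype.ext <| by
    show e.val * x.1 * e.val = x.1
    rw [x.2.1, x.2.2]⟩

instance [Module.Finite O R] : Module.Finite O (Corner e) :=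
  Module.Finite.of_surjective _ (peirceₗ_surjective e)

instance [Module.IsTorsionFree O R] : Module.IsTorsionFree O (Corner e) :=
  Function.Injective.moduleIsTorsionFree (fun x : Corner e => x.1)
    (fun _ _ => Subtype.ext) fun _ _ => rfl

end Corner

instance {O k G : Type u} [CommRing O] [Field k] [Group G] [Finite G] {κ : O →+* k}
    {P : Subgroup G} {b : GA O G} (D : SourceIdemData O k G κ P b) : Module.Finite O D.A :=
  inferInstanceAs (Module.Finite O (Corner _))

instance {O k G : Type u} [CommRing O] [Field k] [Group G] {κ : O →+* k}
    {P : Subgroup G} {b : GA O G} (D : SourceIdemData O k G κ P b) :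
    Module.IsTorsionFree O D.A :=
  inferInstanceAs (Module.IsTorsionFree O (Corner _))

section Nakayama

variable {O : Type*} [CommRing O]

theorem surjective_of_sub_mem_smul_top {M : Type*} [AddCommGroup M] [Module O M]
    [Module.Finite O M] {I : Ideal O} (hI : I ≤ Ideal.jacobson ⊥) (f : M →ₗ[O] M)
    (hf : ∀ x, x - f x ∈ I • (⊤ : Submodule O M)) : Function.Surjective f := by
  refine LinearMap.range_eq_top.mp <| top_le_iff.mp <|
    Submodule.le_of_le_smul_of_le_jacobson_bot Module.Finite.fg_top hI fun x _ => ?_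
  simpa using Submodule.add_mem_sup (LinearMap.mem_range_self f x) (hf x)

theorem isUnit_one_add_smul_of_mem_jacobson {A : Type*} [Ring A] [Algebra O A]
    [Module.Finite O A] {π : O} (hπ : π ∈ Ideal.jacobson (⊥ : Ideal O)) (a : A) :
    IsUnit (1 + π • a) := by
  have hI : Ideal.span {π} ≤ Ideal.jacobson ⊥ := (Ideal.span_singleton_le_iff_mem _).mpr hπ
  have hsmul : ∀ y : A, -(π • y) ∈ Ideal.span {π} • (⊤ : Submodule O A) := fun y =>
    neg_mem (Submodule.smul_mem_smul (Ideal.mem_span_singleton_self π) trivial)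
  obtain ⟨d, hd⟩ := surjective_of_sub_mem_smul_top hI (LinearMap.mulLeft O (1 + π • a))
    (fun x => by simpa [add_mul, smul_mul_assoc] using hsmul (a * x)) 1
  obtain ⟨d', hd'⟩ := surjective_of_sub_mem_smul_top hI (LinearMap.mulRight O (1 + π • a))
    (fun x => by simpa [mul_add, mul_smul_comm] using hsmul (x * a)) 1
  exact isUnit_iff_exists_and_exists.mpr ⟨⟨d, hd⟩, ⟨d', hd'⟩⟩

end Nakayama

theorem commute_of_commute_one_add_smul {O A : Type*} [CommRing O] [Ring A] [Algebra O A]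
    {π : O} (hπ : IsSMulRegular A π) {t a : A} (h : Commute t (1 + π • a)) : Commute t a :=
  hπ <| by simpa [Commute, SemiconjBy, mul_add, add_mul, mul_smul_comm, smul_mul_assoc] using h

theorem isUnit_natCast_of_not_dvd {O k : Type*} [CommRing O] [IsLocalRing O] [Ring k]
    (κ : O →+* k) (hκ : IsLocalRing.maximalIdeal O ≤ RingHom.ker κ) (p : ℕ) [CharP k p]
    {n : ℕ} (hn : ¬ p ∣ n) : IsUnit (n : O) := by
  by_contra h
  apply hn
  rw [← CharP.cast_eq_zero_iff k p, ← map_natCast κ]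
  exact hκ ((IsLocalRing.mem_maximalIdeal _).mpr h)

section TwistedFamily

variable {O A E : Type*} [CommRing O] [Ring A] [Algebra O A]

theorem isUnit_of_mul_eq_smul [Group E] (τ : E → E → Oˣ) (v : E → A) (hv1 : v 1 = 1)
    (hv : ∀ x y, v x * v y = (τ x y : O) • v (x * y)) (x : E) : IsUnit (v x) := by
  refine isUnit_iff_exists_and_exists.mpr
    ⟨⟨(↑(τ x x⁻¹)⁻¹ : O) • v x⁻¹, ?_⟩, ⟨(↑(τ x⁻¹ x)⁻¹ : O) • v x⁻¹, ?_⟩⟩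
  · rw [mul_smul_comm, hv, mul_inv_cancel, hv1, smul_smul, Units.inv_mul, one_smul]
  · rw [smul_mul_assoc, hv, inv_mul_cancel, hv1, smul_smul, Units.inv_mul, one_smul]

variable [Fintype E]

theorem mul_sum_mul_inv [Group E] (τ : E → E → O) (u : E → A) (v : E → Aˣ)
    (hu : ∀ x y, u x * u y = τ x y • u (x * y))
    (hv : ∀ x y, (v x * v y : A) = τ x y • (v (x * y) : A)) (y : E) :
    u y * ∑ x, u x * ↑(v x)⁻¹ = (∑ x, u x * ↑(v x)⁻¹) * v y := by
  rw [Finset.mul_sum, Finset.sum_mul]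
  refine Fintype.sum_equiv (Equiv.mulLeft y) _ _ fun x => ?_
  rw [Equiv.coe_mulLeft, ← mul_assoc, hu]
  calc τ y x • u (y * x) * ↑(v x)⁻¹
      = u (y * x) * ↑(v (y * x))⁻¹ * (τ y x • ↑(v (y * x))) * ↑(v x)⁻¹ := by
        rw [mul_smul_comm, Units.inv_mul_cancel_right]
    _ = u (y * x) * ↑(v (y * x))⁻¹ * v y := by
        rw [← hv, ← mul_assoc, Units.mul_inv_cancel_right]

theorem commute_sum_mul_inv (u : E → A) (v : E → Aˣ) (t : A)
    (h : ∀ x, ∃ t', u x * t' = t * u x ∧ ↑(v x) * t' = t * v x) :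
    Commute t (∑ x, u x * ↑(v x)⁻¹) :=
  Commute.sum_right _ _ _ fun x _ => by
    obtain ⟨t', hu, hv⟩ := h x
    exact (SemiconjBy.mul_left hu (SemiconjBy.units_inv_symm_left hv)).symm

theorem sum_mul_inv_eq_card_add_smul (u : E → A) (v : E → Aˣ) {π : O}
    (h : ∀ x, ∃ a, (v x : A) - u x = π • a) :
    ∃ a : A, ∑ x, u x * ↑(v x)⁻¹ = (Fintype.card E : O) • 1 + π • a := by
  choose a ha using h
  refine ⟨-∑ x, a x * ↑(v x)⁻¹, ?_⟩
  have hx : ∀ x, u x * ↑(v x)⁻¹ = 1 - π • (a x * ↑(v x)⁻¹) := fun x => by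
    rw [← smul_mul_assoc, ← ha, sub_mul, Units.mul_inv, sub_sub_cancel]
  simp only [hx, Finset.sum_sub_distrib, Finset.sum_const, Finset.card_univ, ← Finset.smul_sum,
    smul_neg, Nat.cast_smul_eq_nsmul, ← sub_eq_add_neg]

end TwistedFamily

namespace PuigEmbedData

variable {O k G : Type u} [CommRing O] [Field k] [Group G] [Finite G] {κ : O →+* k}
  {P : Subgroup G} {b : GA O G} {p : ℕ} (Pd : PuigEmbedData O k G κ P b p)

lemma bas_eq_pUnit_mul (q : ↥P) (x : Pd.E) : Pd.bas (q, x) = Pd.D.pUnit q * Pd.bas (1, x) := by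
  simpa [Pd.bas_one, (Pd.τ_one x).1] using (Pd.bas_mul q 1 1 x).symm

def basE (x : Pd.E) : ↥Pd.L := ⟨Pd.bas (1, x), Pd.bas_mem _⟩

lemma basE_one : Pd.basE 1 = 1 :=
  Subtype.ext <| (Pd.bas_one 1).trans (map_one _)

lemma basE_mul_basE (x y : Pd.E) :
    Pd.basE x * Pd.basE y = (Pd.τ x y : O) • Pd.basE (x * y) :=
  Subtype.ext <| by simpa [basE] using Pd.bas_mul 1 1 x y

lemma basE_mul_pUnit (x : Pd.E) (q : ↥P) :
    Pd.basE x * ⟨Pd.D.pUnit q, Pd.punit_mem q⟩ =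
      ⟨Pd.D.pUnit (Pd.act x q), Pd.punit_mem _⟩ * Pd.basE x :=
  Subtype.ext <| by
    show Pd.bas (1, x) * Pd.D.pUnit q = Pd.D.pUnit (Pd.act x q) * Pd.bas (1, x)
    rw [← Pd.bas_eq_pUnit_mul]
    simpa [Pd.bas_one, (Pd.τ_one x).2] using Pd.bas_mul 1 q x 1

lemma span_bas_eq_top :
    Submodule.span O (Set.range fun w => (⟨Pd.bas w, Pd.bas_mem w⟩ : Pd.L)) = ⊤ :=
  (Submodule.span_range_subtype_eq_top_iff (Subalgebra.toSubmodule Pd.L) Pd.bas_mem).mpr <|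
    le_antisymm (Submodule.span_le.mpr (Set.range_subset_iff.mpr Pd.bas_mem)) Pd.bas_span

theorem algHom_eq_conj (γ : ↥Pd.L →ₐ[O] Pd.D.A)
    (hγP : ∀ u : ↥P, γ ⟨Pd.D.pUnit u, Pd.punit_mem u⟩ = Pd.D.pUnit u) (c : Pd.D.Aˣ)
    (hcP : ∀ u : ↥P, Commute (Pd.D.pUnit u) c)
    (hc : ∀ x : Pd.E, (Pd.basE x : Pd.D.A) * c = c * γ (Pd.basE x)) (y : ↥Pd.L) :
    γ y = ↑c⁻¹ * y * c := by
  have hbas : ∀ w, γ ⟨Pd.bas w, Pd.bas_mem w⟩ = ↑c⁻¹ * Pd.bas w * c := by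
    rintro ⟨q, x⟩
    have hsplit : (⟨Pd.bas (q, x), Pd.bas_mem _⟩ : ↥Pd.L) =
        ⟨Pd.D.pUnit q, Pd.punit_mem q⟩ * Pd.basE x :=
      Subtype.ext (Pd.bas_eq_pUnit_mul q x)
    rw [hsplit, map_mul, hγP, (Units.eq_inv_mul_iff_mul_eq c).mpr (hc x).symm, ← mul_assoc,
      (hcP q).units_inv_right.eq, Pd.bas_eq_pUnit_mul]
    simp only [basE, mul_assoc]
  have hconj := LinearMap.ext_on_range Pd.span_bas_eq_top (f := γ.toLinearMap)
    (g := (LinearMap.mulLeft O (↑c⁻¹ : Pd.D.A) ∘ₗ LinearMap.mulRight O (c : Pd.D.A)) ∘ₗ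
      Pd.L.val.toLinearMap) fun w => by simpa [mul_assoc] using hbas w
  simpa [mul_assoc] using LinearMap.congr_fun hconj y

theorem exists_one_add_smul_intertwining (γ : ↥Pd.L →ₐ[O] Pd.D.A)
    (hγP : ∀ u : ↥P, γ ⟨Pd.D.pUnit u, Pd.punit_mem u⟩ = Pd.D.pUnit u) {π : O}
    (hγred : ∀ y : ↥Pd.L, ∃ a : Pd.D.A, γ y - (y : Pd.D.A) = π • a)
    (hE : IsUnit (Fintype.card Pd.E : O)) :
    ∃ a : Pd.D.A, (∀ u : ↥P, Commute (Pd.D.pUnit u) (1 + π • a)) ∧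
      ∀ x : Pd.E, (Pd.basE x : Pd.D.A) * (1 + π • a) = (1 + π • a) * γ (Pd.basE x) := by
  have hγmul : ∀ x y, γ (Pd.basE x) * γ (Pd.basE y) = (Pd.τ x y : O) • γ (Pd.basE (x * y)) :=
    fun x y => by rw [← map_mul, basE_mul_basE, map_smul]
  have hv := isUnit_of_mul_eq_smul Pd.τ (fun x => γ (Pd.basE x)) (by simp [basE_one]) hγmul
  let v x := (hv x).unit
  obtain ⟨a, ha⟩ := sum_mul_inv_eq_card_add_smul (fun x => (Pd.basE x : Pd.D.A)) v
    fun x => hγred (Pd.basE x)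
  obtain ⟨n, hn⟩ := hE
  have hc : 1 + π • ((↑n⁻¹ : O) • a) = (↑n⁻¹ : O) • ∑ x, (Pd.basE x : Pd.D.A) * ↑(v x)⁻¹ := by
    rw [ha, smul_add, ← hn, smul_smul (↑n⁻¹ : O) (n : O), Units.inv_mul, one_smul, smul_comm π]
  refine ⟨(↑n⁻¹ : O) • a, fun q => ?_, fun x => ?_⟩
  · refine hc ▸ (commute_sum_mul_inv _ v _ fun x =>
      ⟨Pd.D.pUnit ((Pd.act x)⁻¹ q), ?_, ?_⟩).smul_right _
    · have h := congrArg Subtype.val (Pd.basE_mul_pUnit x ((Pd.act x)⁻¹ q))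
      rw [MulAut.apply_inv_self] at h
      exact h
    · have h := congrArg γ (Pd.basE_mul_pUnit x ((Pd.act x)⁻¹ q))
      rw [map_mul, map_mul, hγP, hγP, MulAut.apply_inv_self] at h
      exact h
  · rw [hc, mul_smul_comm, smul_mul_assoc,
      mul_sum_mul_inv (fun x y => (Pd.τ x y : O)) _ v (fun x y => congrArg Subtype.val
        (Pd.basE_mul_basE x y)) hγmul x]
    rfl

end PuigEmbedData

theorem embedding_conjugate_to_inclusion_general
    {O k : Type u} [CommRing O] [IsLocalRing O] [Field k] [Algebra O k]
    (p : ℕ) [CharP k p]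
    (hdvr : IsDomain O ∧ IsPrincipalIdealRing O ∧ ¬ IsField O ∧
      IsAdicComplete (IsLocalRing.maximalIdeal O) O ∧
      RingHom.ker (algebraMap O k) = IsLocalRing.maximalIdeal O)
    (piO : O) (hpi : IsLocalRing.maximalIdeal O = Ideal.span {piO})
    {G : Type u} [Group G] [Finite G]
    (b : GA O G) (P : Subgroup G)
    (Pd : PuigEmbedData O k G (algebraMap O k) P b p)
    (γ : ↥Pd.L →ₐ[O] Pd.D.A)
    (hγP : ∀ u : ↥P, γ ⟨Pd.D.pUnit u, Pd.punit_mem u⟩ = Pd.D.pUnit u)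
    (hγred : ∀ y : ↥Pd.L, ∃ a : Pd.D.A, γ y - (y : Pd.D.A) = piO • a) :
    ∃ c cinv : Pd.D.A, c * cinv = 1 ∧ cinv * c = 1 ∧
      (∃ a : Pd.D.A, (∀ u : ↥P, Pd.D.pUnit u * a = a * Pd.D.pUnit u) ∧ c = 1 + piO • a) ∧
      ∀ y : ↥Pd.L, γ y = cinv * (y : Pd.D.A) * c := by
  obtain ⟨hdom, -, hnf, -, hker⟩ := hdvr
  have hπ_mem : piO ∈ IsLocalRing.maximalIdeal O := hpi ▸ Ideal.mem_span_singleton_self piO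
  have hπ_ne : piO ≠ 0 := by
    rintro rfl
    exact hnf (IsLocalRing.isField_iff_maximalIdeal_eq.mpr (by simpa using hpi))
  have hE : IsUnit (Fintype.card Pd.E : O) := isUnit_natCast_of_not_dvd (algebraMap O k)
    hker.ge p (Nat.card_eq_fintype_card (α := Pd.E) ▸ Pd.ord_coprime)
  obtain ⟨a, hcP, hc⟩ := Pd.exists_one_add_smul_intertwining γ hγP hγred hE
  obtain ⟨c, hc_eq⟩ :=
    isUnit_one_add_smul_of_mem_jacobson (IsLocalRing.maximalIdeal_le_jacobson _ hπ_mem) a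
  have haP (u : ↥P) : Commute (Pd.D.pUnit u) a :=
    commute_of_commute_one_add_smul (IsSMulRegular.of_ne_zero hπ_ne) (hcP u)
  refine ⟨c, ↑c⁻¹, c.mul_inv, c.inv_mul, ⟨a, fun u => (haP u).eq, hc_eq⟩, ?_⟩
  exact Pd.algHom_eq_conj γ hγP c (hc_eq ▸ hcP) (hc_eq ▸ hc)

set_option maxHeartbeats 1000000 in
set_option synthInstance.maxHeartbeats 400000 in
/-- Let `O` be a complete discrete valuation ring with maximal ideal
`πO` and residue field `k` of characteristic `p`, with field of fractions of characteristic
`0`.  Let `A = iBi` be a source algebra of a block `B` with defect group `P` and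
`L ≅ O_τ(P ⋊ E)` the canonically embedded source algebra of the Brauer correspondent.
Let `γ : L → A` be an `O`-algebra homomorphism with `γ(u) = u` for all `u ∈ P` whose
reduction modulo `π` is the canonical inclusion `k ⊗ L → k ⊗ A`.  Then there is
`c ∈ 1 + πA^P` such that `γ(y) = c⁻¹ y c` for all `y ∈ L`. -/
theorem embedding_conjugate_to_inclusion
    {O k : Type u} [CommRing O] [IsLocalRing O] [CharZero O] [Field k] [Algebra O k]
    (p : ℕ) [Fact p.Prime] [CharP k p] [PerfectField k]
    (hres : Function.Surjective (algebraMap O k))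
    (hdvr : IsDomain O ∧ IsPrincipalIdealRing O ∧ ¬ IsField O ∧
      IsAdicComplete (IsLocalRing.maximalIdeal O) O ∧
      RingHom.ker (algebraMap O k) = IsLocalRing.maximalIdeal O)
    (piO : O) (hpi : IsLocalRing.maximalIdeal O = Ideal.span {piO})
    {G : Type u} [Group G] [Finite G]
    (hsplitG : ∀ H : Subgroup G, IsSplitAlgebra k (MonoidAlgebra k ↥H))
    (b : GA O G) [CentralElem O G b] (P : Subgroup G) (hdef : IsDefectGroup O G P b)
    (Pd : PuigEmbedData O k G (algebraMap O k) P b p)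
    (γ : ↥Pd.L →ₐ[O] Pd.D.A)
    (hγP : ∀ u : ↥P, γ ⟨Pd.D.pUnit u, Pd.punit_mem u⟩ = Pd.D.pUnit u)
    (hγred : ∀ y : ↥Pd.L, ∃ a : Pd.D.A, γ y - (y : Pd.D.A) = piO • a) :
    ∃ c cinv : Pd.D.A, c * cinv = 1 ∧ cinv * c = 1 ∧
      (∃ a : Pd.D.A, (∀ u : ↥P, Pd.D.pUnit u * a = a * Pd.D.pUnit u) ∧ c = 1 + piO • a) ∧
      ∀ y : ↥Pd.L, γ y = cinv * (y : Pd.D.A) * c :=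
  embedding_conjugate_to_inclusion_general p hdvr piO hpi b P Pd γ hγP hγred

end Paper

end
end

section
/- Let C be a symmetric positive definite real n×n matrix and let π be a permutation of {1,…,n} such that C_{π(i)π(j)} = C_{ij} for all i, j. Let x ∈ ℝ^n be a vector with all entries positive and define y ∈ ℝ^n by y_i = x_{π(i)}. Then y^T C y = x^T C x and x^T C y ≤ x^T C x, with equality x^T C y = x^T C x if and only if y = x. -/
/-!
The permutation invariance of `C` makes the quadratic form take the same value at `x` and at
`y = x ∘ π`, so for `y ≠ x` positive definiteness gives
`0 < (x - y)ᵀC(x - y) = 2 (xᵀCx - xᵀCy)`.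
-/

open Matrix

namespace Matrix

variable {ι R : Type*} [Fintype ι]

theorem dotProduct_mulVec_comp_perm [NonUnitalNonAssocSemiring R] (C : Matrix ι ι R)
    (π : Equiv.Perm ι) (hπ : ∀ i j, C (π i) (π j) = C i j) (u v : ι → R) :
    u ∘ π ⬝ᵥ C *ᵥ (v ∘ π) = u ⬝ᵥ C *ᵥ v := by
  have hC : C.submatrix π π = C := ext hπ
  rw [← hC, submatrix_mulVec_equiv, hC, Function.comp_assoc, Equiv.self_comp_symm,
    Function.comp_id, ← comp_equiv_symm_dotProduct, Function.comp_assoc, Equiv.self_comp_symm,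
    Function.comp_id]

theorem IsSymm.dotProduct_mulVec_sub_sub [CommRing R] {C : Matrix ι ι R} (hC : C.IsSymm)
    (x y : ι → R) :
    (x - y) ⬝ᵥ C *ᵥ (x - y) = x ⬝ᵥ C *ᵥ x - 2 * (x ⬝ᵥ C *ᵥ y) + y ⬝ᵥ C *ᵥ y := by
  have hyx : y ⬝ᵥ C *ᵥ x = x ⬝ᵥ C *ᵥ y := by
    rw [← dotProduct_transpose_mulVec, hC.eq]
  rw [sub_dotProduct, mulVec_sub, dotProduct_sub, dotProduct_sub, hyx]
  ring

theorem PosDef.dotProduct_mulVec_lt_of_ne [CommRing R] [LinearOrder R] [IsStrictOrderedRing R]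
    [StarRing R] [TrivialStar R] {C : Matrix ι ι R} (hC : C.PosDef) {x y : ι → R}
    (hq : y ⬝ᵥ C *ᵥ y = x ⬝ᵥ C *ᵥ x) (hne : y ≠ x) :
    x ⬝ᵥ C *ᵥ y < x ⬝ᵥ C *ᵥ x := by
  have hpos := hC.dotProduct_mulVec_pos (sub_ne_zero.mpr hne.symm)
  rw [star_trivial, (isHermitian_iff_isSymm.mp hC.isHermitian).dotProduct_mulVec_sub_sub, hq]
    at hpos
  linarith

end Matrix

theorem cartan_cauchy_schwarz_step_general
    {n : ℕ} (C : Matrix (Fin n) (Fin n) ℝ) (hpd : C.PosDef)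
    (π : Equiv.Perm (Fin n)) (hπ : ∀ i j, C (π i) (π j) = C i j)
    (x : Fin n → ℝ)
    (y : Fin n → ℝ) (hy : y = fun i => x (π i)) :
    y ⬝ᵥ C.mulVec y = x ⬝ᵥ C.mulVec x ∧
    x ⬝ᵥ C.mulVec y ≤ x ⬝ᵥ C.mulVec x ∧
    (x ⬝ᵥ C.mulVec y = x ⬝ᵥ C.mulVec x ↔ y = x) := by
  have hq : y ⬝ᵥ C *ᵥ y = x ⬝ᵥ C *ᵥ x := hy ▸ dotProduct_mulVec_comp_perm C π hπ x x
  have hlt : y ≠ x → x ⬝ᵥ C *ᵥ y < x ⬝ᵥ C *ᵥ x := hpd.dotProduct_mulVec_lt_of_ne hq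
  refine ⟨hq, ?_, fun h => not_not.mp fun hne => (hlt hne).ne h, fun h => h ▸ rfl⟩
  rcases eq_or_ne y x with rfl | hne
  · exact le_rfl
  · exact (hlt hne).le

/-- Let `C` be a symmetric positive definite real `n × n` matrix and `π` a
permutation of `{1,…,n}` with `C_{π i, π j} = C_{i j}` for all `i, j`.  Let `x ∈ ℝⁿ` have all
entries positive and let `y` be defined by `y i = x (π i)`.  Then `yᵀCy = xᵀCx` and
`xᵀCy ≤ xᵀCx`, with equality `xᵀCy = xᵀCx` if and only if `y = x`. -/
theorem cartan_cauchy_schwarz_step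
    {n : ℕ} (C : Matrix (Fin n) (Fin n) ℝ) (hsymm : C.IsSymm) (hpd : C.PosDef)
    (π : Equiv.Perm (Fin n)) (hπ : ∀ i j, C (π i) (π j) = C i j)
    (x : Fin n → ℝ) (hx : ∀ i, 0 < x i)
    (y : Fin n → ℝ) (hy : y = fun i => x (π i)) :
    y ⬝ᵥ C.mulVec y = x ⬝ᵥ C.mulVec x ∧
    x ⬝ᵥ C.mulVec y ≤ x ⬝ᵥ C.mulVec x ∧
    (x ⬝ᵥ C.mulVec y = x ⬝ᵥ C.mulVec x ↔ y = x) :=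
  cartan_cauchy_schwarz_step_general C hpd π hπ x y hy
end
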